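/- For each x ≥ √(2/π) there exists a unique λ = λ*(x) ≥ 0 such that λ + φ'(λ) = x. Moreover, for each such x, the function λ ↦ λx − λ²/2 − φ(λ) on [0, ∞) attains its global maximum uniquely at λ = λ*(x), and the value of this maximum is μ*(x) = λ*(x)·x − λ*(x)²/2 − φ(λ*(x)). -/

import Mathlib

open MeasureTheory ProbabilityTheory

noncomputable def gaussMatrix (n : ℕ) : Measure (Fin n → Fin n → ℝ) :=
  Measure.pi fun _ => Measure.pi fun _ => gaussianReal 0 1

noncomputable def gaussVec (n : ℕ) : Measure (Fin n → ℝ) :=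
  Measure.pi fun _ => gaussianReal 0 1

/-- The symmetric, zero-diagonal coupling matrix built from the i.i.d. upper-triangular
standard Gaussians. -/
def Wmat {n : ℕ} (ω : Fin n → Fin n → ℝ) (i j : Fin n) : ℝ :=
  if i < j then ω i j else if j < i then ω j i else 0

/-- The Sherrington--Kirkpatrick Hamiltonian `H(σ) = ∑_{i<j} σ_i σ_j W_{ij}`. -/
noncomputable def Ham {n : ℕ} (σ : Fin n → ℝ) (ω : Fin n → Fin n → ℝ) : ℝ :=
  ∑ i : Fin n, ∑ j : Fin n, if i < j then σ i * σ j * Wmat ω i j else 0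

/-- `σ` with its `i`-th spin flipped. -/
def flipSpin {n : ℕ} (σ : Fin n → ℝ) (i : Fin n) : Fin n → ℝ :=
  Function.update σ i (-(σ i))

/-- `σ` is locally optimal if no single spin flip decreases the energy. -/
def IsLocalOpt {n : ℕ} (σ : Fin n → ℝ) (ω : Fin n → Fin n → ℝ) : Prop :=
  ∀ i : Fin n, Ham σ ω ≤ Ham (flipSpin σ i) ω

/-- `σ ∈ {−1,+1}^n`. -/
def IsSpin {n : ℕ} (σ : Fin n → ℝ) : Prop := ∀ i, σ i = 1 ∨ σ i = -1

/-- `‖x‖₁ = ∑ |x i|`. -/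
def l1 {n : ℕ} (ω : Fin n → ℝ) : ℝ := ∑ i, |ω i|

/-- The standard normal cumulative distribution function `Φ`. -/
noncomputable def normCdf (t : ℝ) : ℝ :=
  ∫ x in Set.Iic t, (Real.sqrt (2 * Real.pi))⁻¹ * Real.exp (-x ^ 2 / 2)

/-- `φ(λ) = log (2 Φ(λ))`. -/
noncomputable def phiFn (l : ℝ) : ℝ := Real.log (2 * normCdf l)

/-- The Fenchel–Légendre transform `μ*(x) = sup_{λ ≥ 0} (λ x − λ²/2 − φ(λ))`. -/
noncomputable def muStar (x : ℝ) : ℝ :=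
  ⨆ l : {l : ℝ // 0 ≤ l}, ((l : ℝ) * x - (l : ℝ) ^ 2 / 2 - phiFn l)

/-- `R(x) = x²/4 − μ*(x)`. -/
noncomputable def Rfun (x : ℝ) : ℝ := x ^ 2 / 4 - muStar x

open Set Real MeasureTheory


noncomputable def npdf (t : ℝ) : ℝ := (Real.sqrt (2 * Real.pi))⁻¹ * Real.exp (-t ^ 2 / 2)

lemma npdf_pos (t : ℝ) : 0 < npdf t := by
  have : 0 < Real.sqrt (2 * Real.pi) := Real.sqrt_pos.2 (by positivity)
  unfold npdf; positivity

lemma npdf_cont : Continuous npdf := by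
  unfold npdf; fun_prop

lemma integrable_npdf : Integrable npdf := by
  have h : Integrable (fun x : ℝ => Real.exp (-(1/2) * x ^ 2)) := integrable_exp_neg_mul_sq (by norm_num)
  have := h.const_mul (Real.sqrt (2 * Real.pi))⁻¹
  refine this.congr ?_
  filter_upwards with t
  unfold npdf
  ring_nf

lemma integral_npdf : ∫ t, npdf t = 1 := by
  have h := integral_gaussian (1/2 : ℝ)
  have h2 : ∫ x : ℝ, Real.exp (-x ^ 2 / 2) = Real.sqrt (2 * Real.pi) := by
    rw [show (Real.sqrt (2 * Real.pi)) = Real.sqrt (Real.pi / (1/2)) by norm_num [mul_comm]]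
    rw [← h]
    congr 1; ext x; ring_nf
  unfold npdf
  rw [integral_const_mul, h2]
  rw [inv_mul_cancel₀ (by positivity : Real.sqrt (2*Real.pi) ≠ 0)]

lemma normCdf_eq (t : ℝ) : normCdf t = ∫ x in Set.Iic t, npdf x := rfl

lemma normCdf_pos (t : ℝ) : 0 < normCdf t := by
  rw [normCdf_eq]
  rw [setIntegral_pos_iff_support_of_nonneg_ae]
  · have : Function.support npdf = Set.univ := by
      ext y; simp [Function.mem_support, (npdf_pos y).ne']
    rw [this, Set.univ_inter]
    simp [Real.volume_Iic]
  · filter_upwards with y using (npdf_pos y).le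
  · exact integrable_npdf.integrableOn

lemma normCdf_le_one (t : ℝ) : normCdf t ≤ 1 := by
  rw [normCdf_eq, ← integral_npdf]
  exact setIntegral_le_integral integrable_npdf
    (by filter_upwards with y using (npdf_pos y).le)

lemma normCdf_zero : normCdf 0 = 1 / 2 := by
  have h1 : (∫ x in Set.Iic (0:ℝ), npdf x) = ∫ x in Set.Ioi (0:ℝ), npdf x := by
    have := integral_comp_neg_Iic (0:ℝ) npdf
    rw [neg_zero] at this
    rw [← this]
    congr 1
    ext y
    unfold npdf
    rw [neg_pow, ]
    ring_nf
  have h2 : (∫ x in Set.Iic (0:ℝ), npdf x) + (∫ x in Set.Ioi (0:ℝ), npdf x) = 1 := by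
    rw [intervalIntegral.integral_Iic_add_Ioi integrable_npdf.integrableOn
      integrable_npdf.integrableOn, integral_npdf]
  rw [normCdf_eq]
  linarith [h1, h2]

lemma hasDerivAt_normCdf (t : ℝ) : HasDerivAt normCdf (npdf t) t := by
  have heq : normCdf = fun u => normCdf 0 + ∫ x in (0:ℝ)..u, npdf x := by
    funext u
    rw [normCdf_eq, normCdf_eq, ← intervalIntegral.integral_Iic_sub_Iic
      integrable_npdf.integrableOn integrable_npdf.integrableOn]
    ring
  rw [heq]
  exact (intervalIntegral.integral_hasDerivAt_right
    (integrable_npdf.intervalIntegrable)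
    (npdf_cont.aestronglyMeasurable.stronglyMeasurableAtFilter)
    (npdf_cont.continuousAt)).const_add _

lemma normCdf_mono : Monotone normCdf := by
  have : ∀ t, 0 ≤ deriv normCdf t := by
    intro t; rw [(hasDerivAt_normCdf t).deriv]; exact (npdf_pos t).le
  exact monotone_of_deriv_nonneg (fun t => (hasDerivAt_normCdf t).differentiableAt) this

lemma normCdf_half_le {t : ℝ} (ht : 0 ≤ t) : 1 / 2 ≤ normCdf t := by
  rw [← normCdf_zero]; exact normCdf_mono ht



lemma hasDerivAt_phiFn (l : ℝ) :
    HasDerivAt phiFn (npdf l / normCdf l) l := by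
  have h1 : HasDerivAt (fun u => 2 * normCdf u) (2 * npdf l) l :=
    (hasDerivAt_normCdf l).const_mul 2
  have hc := (normCdf_pos l).ne'
  have h2 := h1.log (by positivity : (2 : ℝ) * normCdf l ≠ 0)
  refine h2.congr_deriv ?_
  field_simp

lemma deriv_phiFn (l : ℝ) : deriv phiFn l = npdf l / normCdf l :=
  (hasDerivAt_phiFn l).deriv

lemma hasDerivAt_npdf (t : ℝ) : HasDerivAt npdf (-t * npdf t) t := by
  have h1 : HasDerivAt (fun u : ℝ => -u ^ 2 / 2) (-t) t := by
    have := ((hasDerivAt_pow 2 t).neg).div_const 2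
    refine this.congr_deriv ?_; push_cast; ring
  have h2 := (h1.exp).const_mul (Real.sqrt (2 * Real.pi))⁻¹
  refine h2.congr_deriv ?_
  unfold npdf; ring

/-- `F t = Φ(t)² − φ(t)(tΦ(t)+φ(t))`, positive on `[0,∞)`. -/
noncomputable def Ffun (t : ℝ) : ℝ :=
  normCdf t ^ 2 - npdf t * (t * normCdf t + npdf t)

lemma hasDerivAt_Ffun (t : ℝ) :
    HasDerivAt Ffun (npdf t * (normCdf t + t ^ 2 * normCdf t + t * npdf t)) t := by
  have h1 : HasDerivAt (fun u => normCdf u ^ 2) (2 * normCdf t * npdf t) t := by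
    have := (hasDerivAt_normCdf t).pow 2
    refine this.congr_deriv ?_; push_cast; ring
  have h2 : HasDerivAt (fun u => npdf u * (u * normCdf u + npdf u))
      ((-t * npdf t) * (t * normCdf t + npdf t) +
        npdf t * ((1 * normCdf t + t * npdf t) + (-t * npdf t))) t := by
    exact (hasDerivAt_npdf t).mul
      (((hasDerivAt_id t).mul (hasDerivAt_normCdf t)).add (hasDerivAt_npdf t))
  have := h1.sub h2
  refine this.congr_deriv ?_; ring

lemma Ffun_pos {t : ℝ} (ht : 0 ≤ t) : 0 < Ffun t := by
  have hmono : MonotoneOn Ffun (Set.Ici 0) := by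
    apply monotoneOn_of_deriv_nonneg (convex_Ici 0)
    · exact fun u _ => ((hasDerivAt_Ffun u).differentiableAt.continuousAt).continuousWithinAt
    · exact fun u _ => (hasDerivAt_Ffun u).differentiableAt.differentiableWithinAt
    · intro u hu
      rw [interior_Ici] at hu
      rw [(hasDerivAt_Ffun u).deriv]
      have h1 := npdf_pos u
      have h2 := normCdf_pos u
      have hu' : 0 < u := hu
      positivity
  have hF0 : 0 < Ffun 0 := by
    unfold Ffun
    rw [normCdf_zero]
    have : npdf 0 ^ 2 = (2 * Real.pi)⁻¹ := by
      unfold npdf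
      norm_num
      rw [mul_pow, ← Real.sqrt_inv, Real.sq_sqrt (by positivity : (0:ℝ) ≤ Real.pi⁻¹),
        inv_pow, Real.sq_sqrt (by norm_num : (0:ℝ) ≤ 2)]
      norm_num
    have hpi : 3 < Real.pi := Real.pi_gt_three
    have h4 : (2 * Real.pi)⁻¹ < 4⁻¹ := by
      apply inv_strictAnti₀ <;> nlinarith
    rw [zero_mul, zero_add, ← sq, this]
    nlinarith
  rcases eq_or_lt_of_le ht with rfl | ht'
  · exact hF0
  · exact lt_of_lt_of_le hF0 (hmono (Set.self_mem_Ici) (le_of_lt ht') ht'.le)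

/-- `g t = t + φ(t)/Φ(t) = t + φ'(t)`. -/
noncomputable def gfun (t : ℝ) : ℝ := t + npdf t / normCdf t

lemma hasDerivAt_gfun (t : ℝ) :
    HasDerivAt gfun (Ffun t / normCdf t ^ 2) t := by
  have hq : HasDerivAt (fun u => npdf u / normCdf u)
      (((-t * npdf t) * normCdf t - npdf t * npdf t) / normCdf t ^ 2) t :=
    (hasDerivAt_npdf t).div (hasDerivAt_normCdf t) (normCdf_pos t).ne'
  have := (hasDerivAt_id t).add hq
  refine this.congr_deriv ?_
  have hc := (normCdf_pos t).ne'
  unfold Ffun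
  field_simp
  ring

lemma gfun_strictMonoOn : StrictMonoOn gfun (Set.Ici 0) := by
  apply strictMonoOn_of_deriv_pos (convex_Ici 0)
  · exact fun u _ => (hasDerivAt_gfun u).differentiableAt.continuousAt.continuousWithinAt
  · intro u hu
    rw [interior_Ici] at hu
    rw [(hasDerivAt_gfun u).deriv]
    exact div_pos (Ffun_pos (le_of_lt hu)) (by have := normCdf_pos u; positivity)

lemma gfun_zero : gfun 0 = Real.sqrt (2 / Real.pi) := by
  unfold gfun npdf
  rw [normCdf_zero]
  norm_num
  have h2 : Real.sqrt 2 * Real.sqrt 2 = 2 := Real.mul_self_sqrt (by norm_num)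
  have hp : Real.sqrt Real.pi ≠ 0 := by positivity
  have h2' : Real.sqrt 2 ≠ 0 := by positivity
  field_simp
  nlinarith [Real.sqrt_pos.2 Real.pi_pos]

lemma gfun_ge (t : ℝ) : t ≤ gfun t := by
  unfold gfun
  have := div_pos (npdf_pos t) (normCdf_pos t)
  linarith



lemma hasDerivAt_obj (x m : ℝ) :
    HasDerivAt (fun t => t * x - t ^ 2 / 2 - phiFn t) (x - gfun m) m := by
  have h1 : HasDerivAt (fun t : ℝ => t * x) x m := by
    simpa using (hasDerivAt_id m).mul_const x
  have h2 : HasDerivAt (fun t : ℝ => t ^ 2 / 2) m m := by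
    have := (hasDerivAt_pow 2 m).div_const 2
    refine this.congr_deriv ?_; push_cast; ring
  have := (h1.sub h2).sub (hasDerivAt_phiFn m)
  refine this.congr_deriv ?_
  unfold gfun
  ring

theorem stmt14 (x : ℝ) (hx : Real.sqrt (2 / Real.pi) ≤ x) :
    ∃ l : ℝ, (0 ≤ l ∧ l + deriv phiFn l = x) ∧
      (∀ m : ℝ, 0 ≤ m → m + deriv phiFn m = x → m = l) ∧
      (∀ m : ℝ, 0 ≤ m → m ≠ l →
        m * x - m ^ 2 / 2 - phiFn m < l * x - l ^ 2 / 2 - phiFn l) ∧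
      muStar x = l * x - l ^ 2 / 2 - phiFn l := by
  have hx0 : 0 ≤ x := le_trans (Real.sqrt_nonneg _) hx
  have hgm : ∀ m : ℝ, m + deriv phiFn m = gfun m := by
    intro m; rw [deriv_phiFn]; rfl
  -- existence via IVT
  have hcont : ContinuousOn gfun (Set.Icc 0 x) :=
    fun u _ => (hasDerivAt_gfun u).differentiableAt.continuousAt.continuousWithinAt
  have hivt := intermediate_value_Icc hx0 hcont
  have hmem : x ∈ Set.Icc (gfun 0) (gfun x) := ⟨gfun_zero ▸ hx, gfun_ge x⟩
  obtain ⟨l, hlmem, hgl⟩ := hivt hmem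
  have hl0 : 0 ≤ l := hlmem.1
  have hmax : ∀ m : ℝ, 0 ≤ m → m ≠ l →
      m * x - m ^ 2 / 2 - phiFn m < l * x - l ^ 2 / 2 - phiFn l := by
    intro m hm hne
    rcases lt_or_gt_of_ne hne with hml | hlm
    · -- m < l : strictly increasing on [0, l]
      have hmono : StrictMonoOn (fun t => t * x - t ^ 2 / 2 - phiFn t) (Set.Icc 0 l) := by
        apply strictMonoOn_of_deriv_pos (convex_Icc 0 l)
        · exact fun u _ => (hasDerivAt_obj x u).differentiableAt.continuousAt.continuousWithinAt
        · intro u hu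
          rw [interior_Icc] at hu
          rw [(hasDerivAt_obj x u).deriv]
          have : gfun u < gfun l := gfun_strictMonoOn hu.1.le hl0 hu.2
          linarith [hgl ▸ this]
      exact hmono ⟨hm, hml.le⟩ ⟨hl0, le_rfl⟩ hml
    · -- l < m : strictly decreasing on [l, ∞)
      have hanti : StrictAntiOn (fun t => t * x - t ^ 2 / 2 - phiFn t) (Set.Ici l) := by
        apply strictAntiOn_of_deriv_neg (convex_Ici l)
        · exact fun u _ => (hasDerivAt_obj x u).differentiableAt.continuousAt.continuousWithinAt
        · intro u hu
          rw [interior_Ici] at hu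
          rw [(hasDerivAt_obj x u).deriv]
          have : gfun l < gfun u := gfun_strictMonoOn hl0 (hl0.trans hu.le) hu
          linarith [hgl ▸ this]
      exact hanti Set.self_mem_Ici (le_of_lt hlm) hlm
  refine ⟨l, ⟨hl0, by rw [hgm]; exact hgl⟩, ?_, hmax, ?_⟩
  · intro m hm hmx
    rw [hgm] at hmx
    exact gfun_strictMonoOn.injOn hm hl0 (hmx.trans hgl.symm)
  · have hub : ∀ p : {l : ℝ // 0 ≤ l},
        (p : ℝ) * x - (p : ℝ) ^ 2 / 2 - phiFn p ≤ l * x - l ^ 2 / 2 - phiFn l := by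
      rintro ⟨m, hm⟩
      by_cases h : m = l
      · subst h; exact le_rfl
      · exact (hmax m hm h).le
    apply le_antisymm
    · exact ciSup_le hub
    · exact le_ciSup (⟨_, Set.forall_mem_range.2 hub⟩ : BddAbove _)
        (⟨l, hl0⟩ : {l : ℝ // 0 ≤ l})
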